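/- arXiv:1007.0157 — 5 statements merged into one kernel-verified Lean document; each statement's English description precedes it below -/
import Mathlib

section
/- The class of subgroup separable groups is closed under free products: if A and B are subgroup separable groups, then the free product A * B is subgroup separable. -/
/-- A group is subgroup separable (LERF) if every finitely generated subgroup
can be separated from any element outside it in a finite quotient. -/
def SubgroupSeparable (G : Type) [Group G] : Prop :=
  ∀ K : Subgroup G, K.FG → ∀ g : G, g ∉ K →
    ∃ (Q : Type) (_ : Group Q) (_ : Finite Q) (φ : G →* Q),
      Function.Surjective φ ∧ φ g ∉ K.map φ

/-!
Subgroup separability of `G` means that a finitely generated subgroup `K` and an element `g ∉ K`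
are told apart by a point of a finite `G`-set that is fixed by `K` and moved by `g`.

Let `A ∗ B` act on its cosets of `K`. Reading words for `g` and for the generators of `K`
letter by letter visits finitely many cosets, joined by finitely many steps along letters of
`A` or `B`. Such a finite piece of an `A`-set embeds into a finite `A`-set: in an orbit with base
point `r`, the loops of the piece generate a finitely generated subgroup of the stabilizer of `r`,
and a finite `A`-set separating it from the finitely many elements that distinguish visited points
receives the orbit. Doing the same for `B`, padding both finite sets to a common size and
identifying them along the visited cosets gives a finite `A ∗ B`-set in which `K` fixes the image
of the trivial coset and `g` moves it.
-/

open MulAction Function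

namespace SubgroupSeparable

variable {G : Type} [Group G]

theorem iff_exists_finite_mulAction :
    SubgroupSeparable G ↔ ∀ K : Subgroup G, K.FG → ∀ g : G, g ∉ K →
      ∃ (Y : Type) (_ : Finite Y) (_ : MulAction G Y) (y : Y),
        K ≤ stabilizer G y ∧ g • y ≠ y := by
  constructor
  · intro hG K hK g hg
    obtain ⟨Q, _, _, φ, -, hφg⟩ := hG K hK g hg
    let _ : MulAction G (Q ⧸ K.map φ) := compHom _ φ
    have hstab (x : G) : x ∈ stabilizer G ((1 : Q) : Q ⧸ K.map φ) ↔ φ x ∈ K.map φ := by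
      change φ x ∈ stabilizer Q ((1 : Q) : Q ⧸ K.map φ) ↔ _
      rw [stabilizer_quotient]
    exact ⟨Q ⧸ K.map φ, inferInstance, inferInstance, (1 : Q),
      fun k hk => (hstab k).2 (Subgroup.mem_map_of_mem φ hk), fun hgy => hφg ((hstab g).1 hgy)⟩
  · intro h K hK g hg
    obtain ⟨Y, _, _, y, hKy, hgy⟩ := h K hK g hg
    let ρ := toPermHom G Y
    refine ⟨ρ.range, inferInstance, inferInstance, ρ.rangeRestrict,
      ρ.rangeRestrict_surjective, ?_⟩
    rintro ⟨k, hk, hkg⟩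
    have hρ : ρ k = ρ g := congrArg Subtype.val hkg
    exact hgy <| calc
      g • y = ρ k y := by rw [hρ]; rfl
      _ = y := hKy hk

theorem exists_finite_mulAction_finset (hG : SubgroupSeparable G) {H : Subgroup G} (hH : H.FG)
    (s : Finset G) (hs : ∀ x ∈ s, x ∉ H) :
    ∃ (Y : Type) (_ : Finite Y) (_ : MulAction G Y) (y : Y),
      H ≤ stabilizer G y ∧ ∀ x ∈ s, x • y ≠ y := by
  classical
  induction s using Finset.induction with
  | empty => exact ⟨PUnit, inferInstance, inferInstance, PUnit.unit, fun _ _ => rfl, by simp⟩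
  | insert a s _ ih =>
    obtain ⟨Y₁, _, _, y₁, hHy₁, hay₁⟩ :=
      iff_exists_finite_mulAction.1 hG H hH a (hs a (s.mem_insert_self a))
    obtain ⟨Y₂, _, _, y₂, hHy₂, hsy₂⟩ :=
      ih fun x hx => hs x (Finset.mem_insert_of_mem hx)
    refine ⟨Y₁ × Y₂, inferInstance, inferInstance, (y₁, y₂),
      fun h hh => Prod.ext (hHy₁ hh) (hHy₂ hh), ?_⟩
    rw [Finset.forall_mem_insert]
    exact ⟨fun e => hay₁ (congrArg Prod.fst e),
      fun x hx e => hsy₂ x hx (congrArg Prod.snd e)⟩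

theorem exists_finite_mulAction_injOn_orbit (hG : SubgroupSeparable G) {M : Type}
    [MulAction G M] (r : M) (V : Finset M) (hV : ∀ v ∈ V, v ∈ orbit G r) (T : Finset (G × M))
    (hT : ∀ p ∈ T, p.2 ∈ orbit G r) :
    ∃ (Y : Type) (_ : Finite Y) (_ : MulAction G Y) (ψ : M → Y),
      Set.InjOn ψ V ∧ ∀ p ∈ T, ψ (p.1 • p.2) = p.1 • ψ p.2 := by
  classical
  let b : M → G := invFun (· • r)
  have hb : ∀ m ∈ orbit G r, b m • r = m := fun m hm => invFun_eq (f := (· • r)) hm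
  let H := Subgroup.closure (↑(T.image fun p => (b (p.1 • p.2))⁻¹ * p.1 * b p.2) : Set G)
  have hHr : H ≤ stabilizer G r := by
    rw [Subgroup.closure_le, Finset.coe_image, Set.image_subset_iff]
    intro p hp
    rw [Set.mem_preimage, SetLike.mem_coe, mem_stabilizer_iff, mul_smul, mul_smul,
      inv_smul_eq_iff, hb _ (hT p hp), hb _ (mem_orbit_of_mem_orbit p.1 (hT p hp))]
  let D := ((V ×ˢ V).filter fun q => q.1 ≠ q.2).image fun q => (b q.2)⁻¹ * b q.1
  have hD : ∀ x ∈ D, x ∉ H := by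
    simp only [D, Finset.forall_mem_image, Finset.mem_filter, Finset.mem_product]
    rintro ⟨v, w⟩ ⟨⟨hv, hw⟩, hvw⟩ hx
    have hfix := hHr hx
    rw [mem_stabilizer_iff, mul_smul, inv_smul_eq_iff, hb v (hV v hv), hb w (hV w hw)] at hfix
    exact hvw hfix
  obtain ⟨Y, _, _, y, hHy, hDy⟩ := exists_finite_mulAction_finset hG ⟨_, rfl⟩ D hD
  refine ⟨Y, inferInstance, inferInstance, fun m => b m • y, fun v hv w hw hvw => ?_,
    fun p hp => ?_⟩
  · by_contra hne
    refine hDy _ (Finset.mem_image_of_mem _ (a := (v, w)) ?_) ?_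
    · simpa using ⟨⟨hv, hw⟩, hne⟩
    · rw [mul_smul, inv_smul_eq_iff]
      exact hvw
  · have hfix := hHy (Subgroup.subset_closure (Finset.mem_image_of_mem _ hp))
    rw [mem_stabilizer_iff, mul_smul, mul_smul, inv_smul_eq_iff] at hfix
    exact hfix.symm

theorem exists_finite_mulAction_injOn (hG : SubgroupSeparable G) {M : Type} [MulAction G M]
    (V : Finset M) (T : Finset (G × M)) :
    ∃ (X : Type) (_ : Finite X) (_ : MulAction G X) (π : M → X),
      Set.InjOn π V ∧ ∀ p ∈ T, π (p.1 • p.2) = p.1 • π p.2 := by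
  classical
  let orb : M → orbitRel.Quotient G M := Quotient.mk''
  have mem_orbit_out {m : M} {O : orbitRel.Quotient G M} (h : orb m = O) :
      m ∈ orbit G O.out := by
    rw [← orbitRel.Quotient.orbit_eq_orbit_out _ Quotient.out_eq']
    exact orbitRel.Quotient.mem_orbit.2 h
  have hY (O : orbitRel.Quotient G M) : ∃ (Y : Type) (_ : Finite Y) (_ : MulAction G Y)
      (ψ : M → Y), Set.InjOn ψ ↑(V.filter (orb · = O)) ∧
        ∀ p ∈ T.filter (orb ·.2 = O), ψ (p.1 • p.2) = p.1 • ψ p.2 :=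
    exists_finite_mulAction_injOn_orbit hG O.out _
      (fun v hv => mem_orbit_out (Finset.mem_filter.1 hv).2) _
      (fun p hp => mem_orbit_out (Finset.mem_filter.1 hp).2)
  choose Y _ _ ψ hψV hψT using hY
  let I := V.image orb ∪ T.image (orb ·.2)
  let π : M → Option (Σ O : I, Y O) := fun m =>
    if h : orb m ∈ I then some ⟨⟨orb m, h⟩, ψ _ m⟩ else none
  have hπ (O : orbitRel.Quotient G M) (hO : O ∈ I) (m : M) (hm : orb m = O) :
      π m = some ⟨⟨O, hO⟩, ψ O m⟩ := by
    subst hm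
    exact dif_pos hO
  refine ⟨Option (Σ O : I, Y O), inferInstance, inferInstance, π, fun v hv w hw hvw => ?_,
    fun p hp => ?_⟩
  · have hvI : orb v ∈ I := Finset.mem_union_left _ (Finset.mem_image_of_mem _ hv)
    have hwI : orb w ∈ I := Finset.mem_union_left _ (Finset.mem_image_of_mem _ hw)
    have hvw' : orb w = orb v := by
      rw [hπ _ hvI v rfl, hπ _ hwI w rfl] at hvw
      exact congrArg (·.1.1) (Option.some.inj hvw).symm
    rw [hπ _ hvI v rfl, hπ _ hvI w hvw'] at hvw
    exact hψV _ (Finset.mem_filter.2 ⟨hv, rfl⟩) (Finset.mem_filter.2 ⟨hw, hvw'⟩)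
      (eq_of_heq (Sigma.mk.inj_iff.1 (Option.some.inj hvw)).2)
  · have hI : orb p.2 ∈ I := Finset.mem_union_right _ (Finset.mem_image_of_mem _ hp)
    rw [hπ _ hI _ orbitRel.Quotient.quotient_smul_eq, hπ _ hI _ rfl,
      hψT _ p (Finset.mem_filter.2 ⟨hp, rfl⟩)]
    rfl

end SubgroupSeparable

theorem Equiv.exists_comp_eq_of_injective {W X Y : Type} [Finite X] (e₀ : X ≃ Y)
    {f : W → X} {g : W → Y} (hf : Injective f) (hg : Injective g) :
    ∃ e : X ≃ Y, ∀ w, e (f w) = g w := by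
  classical
  have := Fintype.ofFinite X
  have := Fintype.ofEquiv X e₀
  have hinj : Set.InjOn (extend f g e₀) (Set.range f) := by
    rintro _ ⟨w₁, rfl⟩ _ ⟨w₂, rfl⟩ h
    rw [hf.extend_apply, hf.extend_apply] at h
    rw [hg h]
  obtain ⟨e, he⟩ := Set.MapsTo.exists_equiv_extend_of_card_eq
    (by rw [Finset.card_univ, Fintype.card_congr e₀])
    (fun _ _ => Finset.mem_coe.2 (Finset.mem_univ _)) hinj
  exact ⟨e.trans (Equiv.subtypeUnivEquiv Finset.mem_univ), fun w => by
    simp [he (f w) (Set.mem_range_self w), hf.extend_apply]⟩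

theorem exists_amalgamation_of_injOn {A B M XA XB : Type} [Group A] [Group B]
    [MulAction A XA] [MulAction B XB] [Finite XA] [Finite XB] {V : Set M} {πA : M → XA}
    {πB : M → XB} (hA : Set.InjOn πA V) (hB : Set.InjOn πB V) :
    ∃ (X : Type) (_ : Finite X) (ρA : A →* Equiv.Perm X) (ρB : B →* Equiv.Perm X)
      (jA : XA → X) (jB : XB → X), Injective jA ∧ (∀ a x, jA (a • x) = ρA a (jA x)) ∧
        (∀ b y, jB (b • y) = ρB b (jB y)) ∧ ∀ m ∈ V, jA (πA m) = jB (πB m) := by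
  obtain ⟨e, he⟩ := (Equiv.sumComm XA XB).exists_comp_eq_of_injective
    (f := fun v : V => Sum.inl (πA v)) (g := fun v : V => Sum.inl (πB v))
    (Sum.inl_injective.comp (Set.injOn_iff_injective.1 hA))
    (Sum.inl_injective.comp (Set.injOn_iff_injective.1 hB))
  refine ⟨XA ⊕ XB, inferInstance,
    (Equiv.Perm.sumCongrHom XA XB).comp ((toPermHom A XA).prod 1),
    e.symm.permCongrHom.toMonoidHom.comp
      ((Equiv.Perm.sumCongrHom XB XA).comp ((toPermHom B XB).prod 1)),
    Sum.inl, fun y => e.symm (Sum.inl y), Sum.inl_injective, fun a x => rfl, fun b y => ?_,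
    fun m hm => e.eq_symm_apply.2 (he ⟨m, hm⟩)⟩
  simp [Equiv.permCongrHom, Equiv.permCongr_apply]

open Monoid

theorem SubgroupSeparable.exists_finite_coprod_mulAction_injOn {A B : Type} [Group A] [Group B]
    (hA : SubgroupSeparable A) (hB : SubgroupSeparable B) {M : Type}
    [MulAction (Coprod A B) M] (V : Finset M) (T : Finset ((A ⊕ B) × M)) :
    ∃ (X : Type) (_ : Finite X) (_ : MulAction (Coprod A B) X) (π : M → X), Set.InjOn π V ∧
      ∀ p ∈ T, π (Sum.elim Coprod.inl Coprod.inr p.1 • p.2) =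
        Sum.elim Coprod.inl Coprod.inr p.1 • π p.2 := by
  classical
  -- the two finite sets are glued along `W`, which therefore holds the endpoints of all steps
  let W := V ∪ T.image Prod.snd ∪ T.image fun p => Sum.elim Coprod.inl Coprod.inr p.1 • p.2
  let _ : MulAction A M := compHom M (Coprod.inl : A →* Coprod A B)
  let _ : MulAction B M := compHom M (Coprod.inr : B →* Coprod A B)
  obtain ⟨XA, _, _, πA, hπAW, hπAT⟩ := hA.exists_finite_mulAction_injOn W
    (T.preimage (fun p => (Sum.inl p.1, p.2)) (fun _ _ _ _ h => by simpa [Prod.ext_iff] using h))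
  obtain ⟨XB, _, _, πB, hπBW, hπBT⟩ := hB.exists_finite_mulAction_injOn W
    (T.preimage (fun p => (Sum.inr p.1, p.2)) (fun _ _ _ _ h => by simpa [Prod.ext_iff] using h))
  obtain ⟨X, _, ρA, ρB, jA, jB, hjA, hρA, hρB, hj⟩ :=
    exists_amalgamation_of_injOn (A := A) (B := B) hπAW hπBW
  let _ : MulAction (Coprod A B) X := compHom X (Coprod.lift ρA ρB)
  have hVW : V ⊆ W := Finset.subset_union_left.trans Finset.subset_union_left
  refine ⟨X, inferInstance, inferInstance, jA ∘ πA, hjA.comp_injOn (hπAW.mono hVW), ?_⟩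
  rintro ⟨a | b, m⟩ hp
  · change jA (πA (a • m)) = ρA a (jA (πA m))
    rw [hπAT (a, m) (Finset.mem_preimage.2 hp), hρA]
  · have hmW : m ∈ W :=
      Finset.mem_union_left _ (Finset.mem_union_right _ (Finset.mem_image_of_mem _ hp))
    have hbmW : Coprod.inr b • m ∈ W := Finset.mem_union_right _ (Finset.mem_image_of_mem _ hp)
    change jA (πA (Coprod.inr b • m)) = ρB b (jA (πA m))
    rw [hj _ hbmW, hj _ hmW, ← hρB]
    exact congrArg jB (hπBT (b, m) (Finset.mem_preimage.2 hp))

def pathSteps {L G M : Type} [Monoid G] [MulAction G M] (ℓ : L → G) (m : M) :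
    List L → List (L × M)
  | [] => []
  | x :: l => (x, (l.map ℓ).prod • m) :: pathSteps ℓ m l

theorem map_prod_smul_of_forall_mem_pathSteps {L G M X : Type} [Monoid G] [MulAction G M]
    [MulAction G X] {ℓ : L → G} {m : M} (π : M → X) (l : List L)
    (h : ∀ p ∈ pathSteps ℓ m l, π (ℓ p.1 • p.2) = ℓ p.1 • π p.2) :
    π ((l.map ℓ).prod • m) = (l.map ℓ).prod • π m := by
  induction l with
  | nil => simp
  | cons x l ih =>
    simp only [pathSteps, List.mem_cons, forall_eq_or_imp] at h
    rw [List.map_cons, List.prod_cons, mul_smul, mul_smul, h.1, ih h.2]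

theorem Monoid.Coprod.exists_list_prod_eq {A B : Type} [Monoid A] [Monoid B] (x : Coprod A B) :
    ∃ l : List (A ⊕ B), (l.map (Sum.elim Coprod.inl Coprod.inr)).prod = x := by
  induction x using Coprod.induction_on with
  | inl a => exact ⟨[Sum.inl a], by simp⟩
  | inr b => exact ⟨[Sum.inr b], by simp⟩
  | mul x y ihx ihy =>
    obtain ⟨l₁, rfl⟩ := ihx
    obtain ⟨l₂, rfl⟩ := ihy
    exact ⟨l₁ ++ l₂, by simp⟩

theorem stmt3 (A B : Type) [Group A] [Group B]
    (hA : SubgroupSeparable A) (hB : SubgroupSeparable B) :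
    SubgroupSeparable (Monoid.Coprod A B) := by
  classical
  refine SubgroupSeparable.iff_exists_finite_mulAction.2 fun K ⟨S, hS⟩ g hg => ?_
  choose word hword using Coprod.exists_list_prod_eq (A := A) (B := B)
  let o : Coprod A B ⧸ K := (1 : Coprod A B)
  let T := (insert g S).biUnion fun x =>
    (pathSteps (Sum.elim Coprod.inl Coprod.inr) o (word x)).toFinset
  obtain ⟨X, _, _, π, hπV, hπT⟩ := hA.exists_finite_coprod_mulAction_injOn hB {o, g • o} T
  have hπ : ∀ x ∈ insert g S, π (x • o) = x • π o := fun x hx => by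
    rw [← hword x]
    exact map_prod_smul_of_forall_mem_pathSteps π _ fun p hp =>
      hπT p (Finset.mem_biUnion.2 ⟨x, hx, List.mem_toFinset.2 hp⟩)
  have hKo : K = stabilizer (Coprod A B) o := (stabilizer_quotient K).symm
  refine ⟨X, inferInstance, inferInstance, π o, ?_, fun hgo => hg ?_⟩
  · rw [← hS, Subgroup.closure_le]
    intro s hs
    have hso : s • o = o := by
      rw [← mem_stabilizer_iff, ← hKo, ← hS]
      exact Subgroup.subset_closure hs
    rw [SetLike.mem_coe, mem_stabilizer_iff, ← hπ s (Finset.mem_insert_of_mem hs), hso]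
  · rw [hKo, mem_stabilizer_iff]
    exact hπV (by simp) (by simp) (by rw [hπ g (Finset.mem_insert_self g S), hgo])
end

section
/- If a group G contains a finite-index subgroup H that is subgroup separable, then G is subgroup separable. -/
open scoped Pointwise


/-- If there is a finite-index subgroup containing `K` but not `g`, we can separate. -/
lemma sep_of_finiteIndex {G : Type} [Group G] {K L : Subgroup G} (hL : L.FiniteIndex)
    (hKL : K ≤ L) {g : G} (hg : g ∉ L) :
    ∃ (Q : Type) (_ : Group Q) (_ : Finite Q) (φ : G →* Q),
      Function.Surjective φ ∧ φ g ∉ K.map φ := by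
  haveI := hL
  haveI : L.normalCore.FiniteIndex := inferInstance
  refine ⟨G ⧸ L.normalCore, inferInstance, inferInstance, QuotientGroup.mk' _,
    QuotientGroup.mk'_surjective _, ?_⟩
  rintro ⟨k, hk, hkg⟩
  rw [QuotientGroup.mk'_eq_mk'] at hkg
  obtain ⟨z, hz, rfl⟩ := hkg
  exact hg (L.mul_mem (hKL hk) (L.normalCore_le hz))

theorem stmt4 (G : Type) [Group G] (H : Subgroup G) (hfi : H.FiniteIndex)
    (hH : SubgroupSeparable H) : SubgroupSeparable G := by
  intro K hK g hg
  haveI := hfi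
  set N := H.normalCore with hN
  haveI hNfi : N.FiniteIndex := inferInstance
  haveI : N.Normal := H.normalCore_normal
  by_cases hgKN : g ∈ K ⊔ N
  · -- write g = k * n with k ∈ K, n ∈ N
    have hmem : g ∈ (K : Set G) * (N : Set G) := by
      rw [← Subgroup.mul_normal K N]; exact hgKN
    obtain ⟨k, hk, n, hn, rfl⟩ := hmem
    have hnK : n ∉ K := fun h => hg (K.mul_mem hk h)
    set K₀ : Subgroup G := N ⊓ K with hK₀
    have hK₀H : K₀ ≤ H := le_trans inf_le_left H.normalCore_le
    -- K₀.subgroupOf H is finitely generated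
    haveI : Group.FG ↥K := (Group.fg_iff_subgroup_fg K).mpr hK
    haveI : (N.subgroupOf K).FiniteIndex := by
      constructor
      intro h0
      have hd : N.relIndex K ∣ N.index := Subgroup.relIndex_dvd_index_of_normal N K
      rw [Subgroup.relIndex] at hd
      rw [h0] at hd
      exact hNfi.index_ne_zero (zero_dvd_iff.mp hd)
    haveI : Group.FG ↥(N.subgroupOf K) := Subgroup.fg_of_index_ne_zero _
    have e1 : ↥(N.subgroupOf K) ≃* ↥K₀ :=
      (Subgroup.equivMapOfInjective _ _ K.subtype_injective).trans
        (MulEquiv.subgroupCongr (Subgroup.subgroupOf_map_subtype N K))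
    have e2 : ↥(K₀.subgroupOf H) ≃* ↥K₀ := Subgroup.subgroupOfEquivOfLe hK₀H
    haveI : Group.FG ↥K₀ := Group.fg_of_surjective (f := e1.toMonoidHom) e1.surjective
    haveI : Group.FG ↥(K₀.subgroupOf H) := Group.fg_of_surjective (f := e2.symm.toMonoidHom) e2.symm.surjective
    have hfg : (K₀.subgroupOf H).FG := (Group.fg_iff_subgroup_fg _).mp inferInstance
    have hnH : n ∈ H := H.normalCore_le hn
    have hnK₀ : (⟨n, hnH⟩ : H) ∉ K₀.subgroupOf H := by
      intro h
      rw [Subgroup.mem_subgroupOf] at h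
      exact hnK h.2
    obtain ⟨Q, _, _, ψ, hψs, hψn⟩ := hH _ hfg ⟨n, hnH⟩ hnK₀
    set A : Subgroup ↥H := ((K₀.subgroupOf H).map ψ).comap ψ with hA
    set M : Subgroup G := A.map H.subtype with hM
    have hMH : M ≤ H := by
      rintro x ⟨a, _, rfl⟩; exact a.2
    have hK₀M : K₀ ≤ M := by
      intro x hx
      exact ⟨⟨x, hK₀H hx⟩, Subgroup.le_comap_map _ _ (by rwa [Subgroup.mem_subgroupOf]), rfl⟩
    have hnM : n ∉ M := by
      rintro ⟨a, ha, hax⟩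
      have : a = ⟨n, hnH⟩ := Subtype.ext hax
      rw [this] at ha
      exact hψn ha
    have hMfi : M.FiniteIndex := by
      haveI : Finite ψ.range := Set.Finite.to_subtype (Set.toFinite _)
      haveI : ψ.ker.FiniteIndex := Subgroup.finiteIndex_ker ψ
      have hker : ψ.ker ≤ A := by
        intro x hx
        have hx1 : ψ x = 1 := hx
        rw [hA, Subgroup.mem_comap, hx1]
        exact Subgroup.one_mem _
      haveI hAfi : A.FiniteIndex := Subgroup.finiteIndex_of_le hker
      constructor
      have hrel : M.relIndex H * H.index = M.index := Subgroup.relIndex_mul_index hMH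
      have hMA : M.subgroupOf H = A :=
        Subgroup.comap_map_eq_self_of_injective H.subtype_injective A
      rw [← hrel, Subgroup.relIndex, hMA]
      exact Nat.mul_ne_zero hAfi.index_ne_zero hfi.index_ne_zero
    haveI := hMfi
    haveI : M.normalCore.FiniteIndex := inferInstance
    apply sep_of_finiteIndex (L := K ⊔ M.normalCore)
      (Subgroup.finiteIndex_of_le le_sup_right) le_sup_left
    intro hgL
    have : k * n ∈ (K : Set G) * (M.normalCore : Set G) := by
      rw [← Subgroup.mul_normal]; exact hgL
    obtain ⟨k', hk', m, hm, hkm⟩ := this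
    have hmM : m ∈ M := M.normalCore_le hm
    have hmN : m ∈ N := Subgroup.normalCore_mono hMH hm
    have hn' : n = (k⁻¹ * k') * m := by
      have hkm' : k' * m = k * n := hkm
      rw [mul_assoc, hkm']; group
    have hkk'N : k⁻¹ * k' ∈ N := by
      have : k⁻¹ * k' = n * m⁻¹ := by rw [hn']; group
      rw [this]; exact N.mul_mem hn (N.inv_mem hmN)
    have hkk'K : k⁻¹ * k' ∈ K := K.mul_mem (K.inv_mem hk) hk'
    have : k⁻¹ * k' ∈ M := hK₀M ⟨hkk'N, hkk'K⟩
    exact hnM (by rw [hn']; exact M.mul_mem this hmM)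
  · exact sep_of_finiteIndex (Subgroup.finiteIndex_of_le le_sup_right) le_sup_left hgKN
end

section
/- Every free group is subgroup separable. -/
open Equiv MulAction FreeGroup

theorem subgroupSeparable_of_exists_perm {G : Type} [Group G]
    (h : ∀ K : Subgroup G, K.FG → ∀ g ∉ K, ∃ (V : Type) (_ : Finite V) (φ : G →* Perm V) (v : V),
      K ≤ (stabilizer (Perm V) v).comap φ ∧ φ g ∉ stabilizer (Perm V) v) :
    SubgroupSeparable G := by
  intro K hK g hg
  obtain ⟨V, _, φ, v, hKv, hgv⟩ := h K hK g hg
  refine ⟨φ.range, inferInstance, inferInstance, φ.rangeRestrict, φ.rangeRestrict_surjective, ?_⟩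
  rintro ⟨k, hk, hkg⟩
  have hkg : φ k = φ g := congrArg Subtype.val hkg
  exact hgv (hkg ▸ hKv hk)

theorem exists_perm_apply_eq_smul_of_smul_mem {H X : Type*} [Group H] [MulAction H X]
    (S : Set X) [Finite S] (a : H) :
    ∃ σ : Perm S, ∀ x : S, a • (x : X) ∈ S → (σ x : X) = a • (x : X) := by
  classical
  let e : {x : S // a • (x : X) ∈ S} ≃ {y : S // a⁻¹ • (y : X) ∈ S} :=
    { toFun x := ⟨⟨a • (x : X), x.2⟩, by simp⟩
      invFun y := ⟨⟨a⁻¹ • (y : X), y.2⟩, by simp⟩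
      left_inv x := by simp
      right_inv y := by simp }
  exact ⟨e.extendSubtype, fun x hx => by rw [e.extendSubtype_apply_of_mem x hx]; rfl⟩

namespace FreeGroup

variable {α X : Type*} [MulAction (FreeGroup α) X] {S : Set X}

theorem lift_apply_mk_singleton_of_smul_mem {σ : α → Perm S}
    (hσ : ∀ a (x : S), of a • (x : X) ∈ S → (σ a x : X) = of a • (x : X))
    (a : α) (b : Bool) (x : S) (hx : mk [(a, b)] • (x : X) ∈ S) :
    (lift σ (mk [(a, b)]) x : X) = mk [(a, b)] • (x : X) := by
  cases b with
  | true => exact hσ a x hx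
  | false =>
    have hinv : mk [(a, false)] = (of a)⁻¹ := by simp [of, inv_mk, invRev]
    rw [hinv] at hx ⊢
    have hy : of a • ((⟨_, hx⟩ : S) : X) ∈ S := by simp
    have : σ a ⟨_, hx⟩ = x := Subtype.ext (by simpa using hσ a _ hy)
    rw [_root_.map_inv, lift_apply_of, Perm.inv_eq_iff_eq.mpr this.symm]

theorem lift_apply_mk_of_forall_suffix {σ : α → Perm S}
    (hσ : ∀ a (x : S), of a • (x : X) ∈ S → (σ a x : X) = of a • (x : X))
    (l : List (α × Bool)) (x : S) (hl : ∀ l' : List (α × Bool), l' <:+ l → mk l' • (x : X) ∈ S) :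
    (lift σ (mk l) x : X) = mk l • (x : X) := by
  induction l with
  | nil => simp [← one_eq_mk]
  | cons c l ih =>
    have hsplit : mk (c :: l) = mk [c] * mk l := by rw [mul_mk]; rfl
    have ih := ih fun l' h => hl l' (h.trans (List.suffix_cons c l))
    have hc : mk [c] • ((lift σ (mk l) x : S) : X) ∈ S := by
      have := hl _ List.suffix_rfl
      rwa [hsplit, mul_smul, ← ih] at this
    rw [hsplit, _root_.map_mul, Perm.mul_apply,
      lift_apply_mk_singleton_of_smul_mem hσ c.1 c.2 _ hc, ih, mul_smul]

theorem exists_hom_perm_apply_eq_smul (x₀ : X) (W : Finset (FreeGroup α)) :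
    ∃ (S : Set X) (_ : Finite S) (φ : FreeGroup α →* Perm S) (h₀ : x₀ ∈ S),
      ∀ w ∈ W, (φ w ⟨x₀, h₀⟩ : X) = w • x₀ := by
  classical
  let S : Set X := insert x₀ (⋃ w ∈ W, ⋃ l ∈ w.toWord.tails, {mk l • x₀})
  have hmem : ∀ w ∈ W, ∀ l, l <:+ w.toWord → mk l • x₀ ∈ S := fun w hw l hl =>
    Set.mem_insert_of_mem _ (by simpa [List.mem_tails] using ⟨w, hw, l, hl, rfl⟩)
  have hfin : Finite S := (W.finite_toSet.biUnion fun w _ =>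
    (w.toWord.tails.finite_toSet.biUnion fun l _ => Set.finite_singleton _)).insert x₀
  choose σ hσ using fun a : α => exists_perm_apply_eq_smul_of_smul_mem S (of a)
  refine ⟨S, hfin, lift σ, Set.mem_insert x₀ _, fun w hw => ?_⟩
  simpa only [mk_toWord] using lift_apply_mk_of_forall_suffix hσ w.toWord _ (hmem w hw)

end FreeGroup

theorem stmt5 (α : Type) : SubgroupSeparable (FreeGroup α) := by
  classical
  refine subgroupSeparable_of_exists_perm fun K ⟨T, hT⟩ g hg => ?_
  obtain ⟨S, hS, φ, h₀, hφ⟩ :=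
    FreeGroup.exists_hom_perm_apply_eq_smul ((1 : FreeGroup α) : FreeGroup α ⧸ K) (insert g T)
  have hfix : ∀ w ∈ insert g T, φ w ∈ stabilizer (Perm S) (⟨_, h₀⟩ : S) ↔ w ∈ K := by
    intro w hw
    rw [← SetLike.ext_iff.mp (stabilizer_quotient K) w, mem_stabilizer_iff, mem_stabilizer_iff,
      Perm.smul_def, Subtype.ext_iff, hφ w hw]
  refine ⟨S, hS, φ, (⟨_, h₀⟩ : S), ?_, fun h => hg ((hfix g (Finset.mem_insert_self g T)).mp h)⟩
  calc K = Subgroup.closure T := hT.symm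
    _ ≤ _ := (Subgroup.closure_le _).mpr fun t ht =>
      (hfix t (Finset.mem_insert_of_mem ht)).mpr (hT ▸ Subgroup.subset_closure ht)
end

section
/- Let F be a free group, let u ∈ F be an element that is not a proper power, and let p be a prime. Then the cyclic subgroup ⟨u⟩ is p'-isolated in F: for every x ∈ F, if xᵖ ∈ ⟨u⟩ then x ∈ ⟨u⟩. -/
/-! The subgroup `⟨x, u⟩` of the free group is free (Nielsen–Schreier). In the rationalized
abelianization `ℚ^(generators)` the relation `x ^ p = u ^ n` makes the images of `x` and `u`
proportional, while the free generators map to a basis; so `⟨x, u⟩` has at most one free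
generator and is cyclic, say `⟨w⟩`. Since `u` is not a proper power, either `u = w ^ (±1)`, and
then `x ∈ ⟨u⟩`, or `u = 1`, and then `x ^ p = 1` forces `x = 1` as free groups are torsion-free. -/

/-- An element is not a proper power: `a = w ^ k` forces `|k| ≤ 1`. -/
def NotProperPower {G : Type} [Group G] (a : G) : Prop :=
  ∀ (w : G) (k : ℤ), a = w ^ k → k.natAbs ≤ 1

theorem Finsupp.eq_of_single_one_mem_span_singleton {K ι : Type*} [Field K] {v : ι →₀ K}
    {i j : ι} (hi : single i 1 ∈ K ∙ v) (hj : single j 1 ∈ K ∙ v) : i = j := by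
  obtain ⟨c, hc⟩ := Submodule.mem_span_singleton.1 hi
  obtain ⟨d, hd⟩ := Submodule.mem_span_singleton.1 hj
  by_contra hij
  have hdc : d • single i (1 : K) = c • single j 1 := by rw [← hc, ← hd, smul_comm]
  have hd0 : d = 0 := by simpa [Finsupp.single_apply, hij] using congrArg (· i) hdc
  have : single j (1 : K) = 0 := by simpa [hd0] using hd.symm
  simp at this

namespace IsFreeGroup

variable {G : Type*} [Group G] [IsFreeGroup G]

theorem subsingleton_generators_of_zpow_eq_zpow {a b : G} {p n : ℤ} (hp : p ≠ 0)
    (hab : a ^ p = b ^ n) (hgen : Subgroup.closure {a, b} = ⊤) :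
    Subsingleton (Generators G) := by
  let φ : G →* Multiplicative (Generators G →₀ ℚ) :=
    lift fun i => Multiplicative.ofAdd (Finsupp.single i 1)
  let B := (φ b).toAdd
  let K : Subgroup G := (AddSubgroup.toSubgroup (ℚ ∙ B).toAddSubgroup).comap φ
  have hK : ∀ g, g ∈ K ↔ (φ g).toAdd ∈ ℚ ∙ B := fun _ => Iff.rfl
  have ha : a ∈ K := by
    have : (p : ℚ) • (φ a).toAdd = (n : ℚ) • B := by
      simpa [B, Int.cast_smul_eq_zsmul] using congrArg (fun g => (φ g).toAdd) hab
    rw [hK, ← Submodule.smul_mem_iff _ (Int.cast_ne_zero.2 hp : (p : ℚ) ≠ 0), this]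
    exact Submodule.smul_mem _ _ (Submodule.mem_span_singleton_self B)
  have hb : b ∈ K := Submodule.mem_span_singleton_self B
  have hKtop : K = ⊤ := top_le_iff.1 <| hgen ▸ (Subgroup.closure_le K).2 (Set.pair_subset ha hb)
  have hof (i : Generators G) : Finsupp.single i 1 ∈ ℚ ∙ B := by
    simpa [φ, lift_of] using (hK (of i)).1 (hKtop ▸ Subgroup.mem_top _)
  exact ⟨fun i j => Finsupp.eq_of_single_one_mem_span_singleton (hof i) (hof j)⟩

theorem isCyclic_of_zpow_eq_zpow {a b : G} {p n : ℤ} (hp : p ≠ 0)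
    (hab : a ^ p = b ^ n) (hgen : Subgroup.closure {a, b} = ⊤) : IsCyclic G := by
  have := subsingleton_generators_of_zpow_eq_zpow hp hab hgen
  have : IsCyclic (FreeGroup (Generators G)) := by
    cases isEmpty_or_nonempty (Generators G)
    · infer_instance
    · have := uniqueOfSubsingleton (Classical.arbitrary (Generators G)); infer_instance
  exact isCyclic_of_surjective (toFreeGroup G).symm (toFreeGroup G).symm.surjective

theorem isCyclic_closure_pair_of_zpow_eq_zpow {a b : G} {p n : ℤ} (hp : p ≠ 0)
    (hab : a ^ p = b ^ n) : IsCyclic (Subgroup.closure {a, b}) := by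
  let H := Subgroup.closure {a, b}
  have haH : a ∈ H := Subgroup.subset_closure (by simp)
  have hbH : b ∈ H := Subgroup.subset_closure (by simp)
  refine isCyclic_of_zpow_eq_zpow (a := ⟨a, haH⟩) (b := ⟨b, hbH⟩) hp (Subtype.ext (by simpa)) ?_
  convert Subgroup.closure_closure_coe_preimage (k := {a, b})
  ext ⟨g, hg⟩
  simp [Subtype.ext_iff]

end IsFreeGroup

theorem NotProperPower.eq_one_or_zpowers_eq {G : Type} [Group G] {u w : G} (hu : NotProperPower u)
    (h : u ∈ Subgroup.zpowers w) : u = 1 ∨ Subgroup.zpowers u = Subgroup.zpowers w := by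
  obtain ⟨k, rfl⟩ := h
  have hk : k = 0 ∨ k = 1 ∨ k = -1 := by have := hu w k rfl; omega
  rcases hk with rfl | rfl | rfl <;> simp

theorem stmt6 {α : Type} (u : FreeGroup α) (hu : NotProperPower u)
    (p : ℕ) (hp : p.Prime) :
    ∀ x : FreeGroup α, x ^ p ∈ Subgroup.zpowers u → x ∈ Subgroup.zpowers u := by
  rintro x ⟨n, hn⟩
  have hcyc := IsFreeGroup.isCyclic_closure_pair_of_zpow_eq_zpow (a := x) (b := u)
    (Int.natCast_ne_zero.2 hp.ne_zero) (by simpa using hn.symm)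
  obtain ⟨w, hw⟩ := (Subgroup.isCyclic_iff_exists_zpowers_eq_top _).1 hcyc
  rcases hu.eq_one_or_zpowers_eq (hw ▸ Subgroup.subset_closure (by simp)) with rfl | h
  · have hx : x = 1 := (pow_eq_one_iff_left hp.ne_zero).1 (by simpa using hn.symm)
    simp [hx]
  · exact h ▸ hw ▸ Subgroup.subset_closure (by simp)
end

section
/- Let F be a free group and let u ∈ F be nontrivial. For every natural number m there exists a natural number n that is a multiple of m and a homomorphism φ of F onto a finite group such that the order of φ(u) is exactly n. (In particular, for every N there is a finite quotient in which the image of u has order greater than N.) -/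
/-!
Conjugating, we may assume that `u` is represented by a nonempty cyclically reduced word
`w = w₀ ⋯ w_{L-1}`. Label the points of the cycle `ℤ/(mL)` periodically by the letters of `w`,
point `p` carrying `w_{p mod L}`, and let each generator `a` act by the partial permutation
that moves `p + 1` to `p` along every edge labelled `a` and `p` to `p + 1` along every edge
labelled `a⁻¹`. Because no two cyclically consecutive letters cancel, these partial maps are
injective and extend to permutations. Reading `w` then shifts `tL + L` to `tL`, so the image of
`u` moves `0` along the orbit `0, -L, -2L, …` of length `m`, and its order is divisible by `m`.
-/

theorem Set.InjOn.exists_perm_eqOn {X : Type*} [Finite X] {s : Set X} {f : X → X}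
    (hf : Set.InjOn f s) : ∃ σ : Equiv.Perm X, ∀ x ∈ s, σ x = f x := by
  cases nonempty_fintype X
  obtain ⟨g, hg⟩ := Set.MapsTo.exists_equiv_extend_of_card_eq (t := Finset.univ) (by simp)
    (fun x _ => Finset.mem_coe.2 (Finset.mem_univ (f x))) hf
  exact ⟨g.trans (Equiv.subtypeUnivEquiv Finset.mem_univ), hg⟩

theorem Equiv.Perm.exists_apply_eq_of_rel {X : Type*} [Finite X] (R : X → X → Prop)
    (hfun : ∀ x y y', R x y → R x y' → y = y') (hinj : ∀ x x' y, R x y → R x' y → x = x') :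
    ∃ σ : Equiv.Perm X, ∀ x y, R x y → σ x = y := by
  classical
  let f : X → X := fun x => if h : ∃ y, R x y then h.choose else x
  have hf : ∀ x y, R x y → f x = y := fun x y hxy => by
    simp only [f, dif_pos (⟨y, hxy⟩ : ∃ y, R x y)]
    exact hfun _ _ _ (Exists.choose_spec _) hxy
  obtain ⟨σ, hσ⟩ := Set.InjOn.exists_perm_eqOn (s := {x | ∃ y, R x y}) (f := f) <| by
    rintro x ⟨y, hxy⟩ x' ⟨y', hxy'⟩ h
    rw [hf x y hxy, hf x' y' hxy'] at h
    exact hinj x x' y hxy (h ▸ hxy')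
  exact ⟨σ, fun x y hxy => (hσ x ⟨y, hxy⟩).trans (hf x y hxy)⟩

namespace FreeGroup

variable {α : Type*}

theorem exists_isCyclicallyReduced_conj (u : FreeGroup α) :
    ∃ (g : FreeGroup α) (w : List (α × Bool)), IsCyclicallyReduced w ∧ u = g * mk w * g⁻¹ := by
  classical
  refine ⟨mk (reduceCyclically.conjugator u.toWord), reduceCyclically u.toWord,
    reduceCyclically.isCyclicallyReduced isReduced_toWord, ?_⟩
  rw [inv_mk, mul_mk, mul_mk, reduceCyclically.conj_conjugator_reduceCyclically, mk_toWord]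

theorem IsCyclicallyReduced.rel_getElem_mod {w : List (α × Bool)} (hw : IsCyclicallyReduced w)
    (hL : 0 < w.length) (i : ℕ) :
    (w[i % w.length]'(Nat.mod_lt _ hL)).1 = (w[(i + 1) % w.length]'(Nat.mod_lt _ hL)).1 →
      (w[i % w.length]'(Nat.mod_lt _ hL)).2 = (w[(i + 1) % w.length]'(Nat.mod_lt _ hL)).2 := by
  by_cases hlast : i % w.length + 1 < w.length
  · have hsucc : (i + 1) % w.length = i % w.length + 1 := by
      rw [← Nat.mod_add_mod, Nat.mod_eq_of_lt hlast]
    simp only [hsucc]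
    exact List.isChain_iff_getElem.1 hw.isReduced _ hlast
  · have hend : i % w.length = w.length - 1 := by have := Nat.mod_lt i hL; omega
    simp only [← Nat.mod_add_mod i, hend, Nat.sub_add_cancel hL, Nat.mod_self]
    exact hw.2 _ (by simp [List.getLast?_eq_getElem?]) _ (by simp [List.head?_eq_getElem?])

theorem apply_mk_add_length {X : Type*} [AddCommGroupWithOne X] (φ : FreeGroup α →* Equiv.Perm X)
    (c : X → α × Bool) (hφ : ∀ p, φ (mk [c p]) (p + 1) = p) (w : List (α × Bool)) (q : X)
    (hw : ∀ (i : ℕ) (hi : i < w.length), c (q + i) = w[i]) :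
    φ (mk w) (q + w.length) = q := by
  induction w generalizing q with
  | nil => simp [← one_eq_mk]
  | cons x w ih =>
    have hx : c q = x := by simpa using hw 0 (Nat.succ_pos _)
    have htail := ih (q + 1) fun i hi => by
      simpa [add_assoc, add_comm (1 : X)] using hw (i + 1) (Nat.succ_lt_succ hi)
    have hlen : q + ((x :: w).length : X) = q + 1 + w.length := by
      rw [List.length_cons, Nat.cast_succ]
      abel
    rw [hlen, ← List.singleton_append, ← mul_mk, _root_.map_mul, Equiv.Perm.mul_apply, htail,
      ← hx, hφ]

theorem exists_hom_perm_mk_singleton_apply_add_one {X : Type*} [AddGroupWithOne X] [Finite X]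
    (c : X → α × Bool) (hc : ∀ p, (c p).1 = (c (p + 1)).1 → (c p).2 = (c (p + 1)).2) :
    ∃ φ : FreeGroup α →* Equiv.Perm X, ∀ p, φ (mk [c p]) (p + 1) = p := by
  have hσ : ∀ a : α, ∃ σ : Equiv.Perm X, ∀ x y,
      (c y = (a, true) ∧ x = y + 1) ∨ (c x = (a, false) ∧ y = x + 1) → σ x = y := by
    intro a
    apply Equiv.Perm.exists_apply_eq_of_rel
    · rintro x y y' (⟨hy, rfl⟩ | ⟨hx, rfl⟩) (⟨hy', hxy'⟩ | ⟨hx', rfl⟩)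
      · exact add_right_cancel hxy'
      · simpa [hy, hx'] using hc y
      · subst hxy'
        simpa [hy', hx] using hc y'
      · rfl
    · rintro x x' y (⟨hy, rfl⟩ | ⟨hx, rfl⟩) (⟨hy', rfl⟩ | ⟨hx', hxx'⟩)
      · rfl
      · subst hxx'
        simpa [hy, hx'] using hc x'
      · simpa [hy', hx] using hc x
      · exact add_right_cancel hxx'
  choose σ hσ using hσ
  refine ⟨FreeGroup.lift σ, fun p => ?_⟩
  rcases hc_p : c p with ⟨a, _ | _⟩
  · have hof : mk [(a, false)] = (of a)⁻¹ := by simp [of, inv_mk, invRev]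
    rw [hof, _root_.map_inv, lift_apply_of, Equiv.Perm.inv_eq_iff_eq]
    exact (hσ a p (p + 1) (Or.inr ⟨hc_p, rfl⟩)).symm
  · exact hσ a (p + 1) p (Or.inl ⟨hc_p, rfl⟩)

theorem IsCyclicallyReduced.exists_hom_perm_dvd_orderOf {w : List (α × Bool)}
    (hw : IsCyclicallyReduced w) (hne : w ≠ []) (m : ℕ) [NeZero m] :
    ∃ φ : FreeGroup α →* Equiv.Perm (ZMod (m * w.length)), m ∣ orderOf (φ (mk w)) := by
  set L := w.length
  have hL : 0 < L := List.length_pos_iff.2 hne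
  have : NeZero (m * L) := ⟨Nat.mul_ne_zero (NeZero.ne m) hL.ne'⟩
  let c : ZMod (m * L) → α × Bool := fun p => w[p.val % L]'(Nat.mod_lt _ hL)
  have hc_cast : ∀ n : ℕ, c n = w[n % L]'(Nat.mod_lt _ hL) := fun n => by
    simp only [c, ZMod.val_natCast, Nat.mod_mod_of_dvd n (dvd_mul_left L m)]
  obtain ⟨φ, hφ⟩ := exists_hom_perm_mk_singleton_apply_add_one c fun p => by
    rw [← ZMod.natCast_zmod_val p, ← Nat.cast_succ, hc_cast, hc_cast]
    exact hw.rel_getElem_mod hL p.val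
  refine ⟨φ, ?_⟩
  have hstep : ∀ t : ℕ, φ (mk w) ((t * L : ℕ) + L) = (t * L : ℕ) := fun t =>
    apply_mk_add_length φ c hφ w _ fun i hi => by
      rw [← Nat.cast_add, hc_cast]
      simp only [Nat.mul_add_mod_self_right, L, Nat.mod_eq_of_lt hi]
  have horbit : ∀ t : ℕ, (φ (mk w) ^ t) ((t * L : ℕ) : ZMod (m * L)) = 0 := by
    intro t
    induction t with
    | zero => simp
    | succ t ih => rw [pow_succ, Equiv.Perm.mul_apply, Nat.succ_mul, Nat.cast_add, hstep, ih]
  have hzero : ((orderOf (φ (mk w)) * L : ℕ) : ZMod (m * L)) = 0 := by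
    rw [← horbit, pow_orderOf_eq_one, Equiv.Perm.one_apply]
  rwa [ZMod.natCast_eq_zero_iff, Nat.mul_dvd_mul_iff_right hL] at hzero

end FreeGroup

open FreeGroup

theorem stmt18 {α : Type} (u : FreeGroup α) (hu : u ≠ 1) (m : ℕ) (hm : 1 ≤ m) :
    ∃ n : ℕ, m ∣ n ∧ 0 < n ∧
      ∃ (Q : Type) (_ : Group Q) (_ : Finite Q) (φ : FreeGroup α →* Q),
        Function.Surjective φ ∧ orderOf (φ u) = n := by
  obtain ⟨g, w, hw, rfl⟩ := u.exists_isCyclicallyReduced_conj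
  have hne : w ≠ [] := by
    rintro rfl
    simp [← one_eq_mk] at hu
  have : NeZero m := ⟨by omega⟩
  have : NeZero (m * w.length) := ⟨by simp [NeZero.ne m, hne]⟩
  obtain ⟨φ, hφ⟩ := hw.exists_hom_perm_dvd_orderOf hne m
  have hconj : orderOf (φ (g * mk w * g⁻¹)) = orderOf (φ (mk w)) := by
    rw [_root_.map_mul, _root_.map_mul, _root_.map_inv]
    exact ((SemiconjBy.conj_mk _ _).orderOf_eq).symm
  exact ⟨_, hconj ▸ hφ, orderOf_pos _, φ.range, inferInstance, inferInstance, φ.rangeRestrict,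
    φ.rangeRestrict_surjective, (Subgroup.orderOf_coe _).symm⟩
end
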